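/- Let A, B be real constants with 0 < A < B and let W be the Flory–Huggins potential. Let n ≥ 1, let Ω ⊂ ℝⁿ be a bounded measurable set of positive Lebesgue measure |Ω|, and let φ : Ω → ℝ be measurable with φ(x) ∈ (−1,1) for almost every x ∈ Ω, such that the function x ↦ W'(φ(x)) is integrable on Ω. Let φ̄ = (1/|Ω|)·∫_Ω φ dx and assume φ̄ ∈ (−1,1). Then ∫_Ω W'(φ(x))·(φ(x) − φ̄) dx ≥ ∫_Ω W(φ(x)) dx − |Ω|·W(φ̄) − ((B−A)/2)·∫_Ω (φ(x) − φ̄)² dx. -/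

import Mathlib

open Real Set MeasureTheory

/-! `W` is `A/2` times the convex function `mixingEntropy r - r²` plus the concave quadratic
`(A - B)/2 · r²`. The tangent-line inequality for the convex part and the exact second-order
Taylor expansion of the quadratic give, pointwise for `r, s ∈ (-1,1)`,
`W'(r)(r - s) ≥ W(r) - W(s) - (B - A)/2 · (r - s)²`.
Taking `r = φ(x)`, `s = φ̄` and integrating over `Ω` gives the theorem; every term other than
`W'(φ)` is a continuous function of `φ ∈ [-1,1]`, hence bounded and integrable on `Ω`. -/

theorem ConvexOn.add_mul_sub_le_of_hasDerivAt {S : Set ℝ} {f : ℝ → ℝ} {x y f' : ℝ}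
    (hf : ConvexOn ℝ S f) (hx : x ∈ S) (hy : y ∈ S) (hd : HasDerivAt f f' x) :
    f x + f' * (y - x) ≤ f y := by
  rcases lt_trichotomy x y with hxy | rfl | hyx
  · have h := hf.le_slope_of_hasDerivAt hx hy hxy hd
    rw [slope_def_field, le_div_iff₀ (sub_pos.2 hxy)] at h
    linarith
  · simp
  · have h := hf.slope_le_of_hasDerivAt hy hx hyx hd
    rw [slope_def_field, div_le_iff₀ (sub_pos.2 hyx)] at h
    linarith

theorem Continuous.integrableOn_comp_of_ae_mem {α X E : Type*} [MeasurableSpace α]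
    [TopologicalSpace X] [NormedAddCommGroup E] {μ : Measure α} {s : Set α} {K : Set X}
    {g : X → E} {φ : α → X} (hg : Continuous g) (hK : IsCompact K) (hs : μ s < ⊤)
    (hφ : AEStronglyMeasurable φ (μ.restrict s)) (hφK : ∀ᵐ x ∂μ.restrict s, φ x ∈ K) :
    IntegrableOn (fun x => g (φ x)) s μ := by
  obtain ⟨C, hC⟩ := hK.exists_bound_of_continuousOn hg.continuousOn
  refine IntegrableOn.of_bound hs (hg.comp_aestronglyMeasurable hφ) C ?_
  filter_upwards [hφK] with x hx using hC _ hx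

/-- At `r = ±1` this takes the value `0 * log 0 = 0`, so it is continuous on `[-1, 1]` (indeed
on `ℝ`, with the junk values `log x = log |x|` outside). -/
noncomputable def mixingEntropy (r : ℝ) : ℝ :=
  (1 + r) * log (1 + r) + (1 - r) * log (1 - r)

@[fun_prop]
theorem continuous_mixingEntropy : Continuous mixingEntropy :=
  (continuous_mul_log.comp (continuous_const_add 1)).add
    (continuous_mul_log.comp (continuous_const.sub continuous_id))

section OnOpenInterval

variable {r : ℝ} (hr : r ∈ Ioo (-1 : ℝ) 1)
include hr

theorem hasDerivAt_mixingEntropy :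
    HasDerivAt mixingEntropy (log (1 + r) - log (1 - r)) r := by
  have hp : HasDerivAt (fun u : ℝ => 1 + u) 1 r := (hasDerivAt_id r).const_add 1
  have hm : HasDerivAt (fun u : ℝ => 1 - u) (-1) r := by
    simpa using (hasDerivAt_id r).const_sub 1
  refine ((hp.mul (hp.log ?_)).add (hm.mul (hm.log ?_))).congr_deriv ?_
  · linarith [hr.1]
  · linarith [hr.2]
  have : 1 + r ≠ 0 := by linarith [hr.1]
  have : 1 - r ≠ 0 := by linarith [hr.2]
  field_simp
  ring

theorem hasDerivAt_log_one_add_sub_log_one_sub :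
    HasDerivAt (fun u => log (1 + u) - log (1 - u)) (2 / (1 - r ^ 2)) r := by
  have hp : HasDerivAt (fun u : ℝ => 1 + u) 1 r := (hasDerivAt_id r).const_add 1
  have hm : HasDerivAt (fun u : ℝ => 1 - u) (-1) r := by
    simpa using (hasDerivAt_id r).const_sub 1
  refine ((hp.log ?_).sub (hm.log ?_)).congr_deriv ?_
  · linarith [hr.1]
  · linarith [hr.2]
  have : 1 + r ≠ 0 := by linarith [hr.1]
  have : 1 - r ≠ 0 := by linarith [hr.2]
  have : 1 - r ^ 2 ≠ 0 := by nlinarith [hr.1, hr.2]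
  field_simp
  ring

theorem hasDerivAt_mixingEntropy_sub_sq :
    HasDerivAt (fun u => mixingEntropy u - u ^ 2) (log (1 + r) - log (1 - r) - 2 * r) r := by
  simpa using (hasDerivAt_mixingEntropy hr).fun_sub (hasDerivAt_pow 2 r)

end OnOpenInterval

theorem convexOn_mixingEntropy_sub_sq :
    ConvexOn ℝ (Ioo (-1) 1) fun r => mixingEntropy r - r ^ 2 := by
  refine convexOn_of_hasDerivWithinAt2_nonneg (convex_Ioo _ _)
    (f' := fun r => log (1 + r) - log (1 - r) - 2 * r) (f'' := fun r => 2 / (1 - r ^ 2) - 2)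
    ?_ ?_ ?_ ?_
  · intro r hr
    exact (hasDerivAt_mixingEntropy_sub_sq hr).continuousAt.continuousWithinAt
  · rw [interior_Ioo]
    intro r hr
    exact (hasDerivAt_mixingEntropy_sub_sq hr).hasDerivWithinAt
  · rw [interior_Ioo]
    intro r hr
    simpa using ((hasDerivAt_log_one_add_sub_log_one_sub hr).fun_sub
      ((hasDerivAt_id' r).const_mul 2)).hasDerivWithinAt
  · rw [interior_Ioo]
    intro r hr
    have hpos : 0 < 1 - r ^ 2 := by nlinarith [hr.1, hr.2]
    have : 2 ≤ 2 / (1 - r ^ 2) := by rw [le_div_iff₀ hpos]; nlinarith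
    linarith

theorem floryHuggins_sub_le_deriv_mul_sub {A B r s : ℝ} (hA : 0 ≤ A)
    (hr : r ∈ Ioo (-1 : ℝ) 1) (hs : s ∈ Ioo (-1 : ℝ) 1) :
    (A / 2 * mixingEntropy r - B / 2 * r ^ 2) - (A / 2 * mixingEntropy s - B / 2 * s ^ 2)
        - (B - A) / 2 * (r - s) ^ 2 ≤
      (A / 2 * log ((1 + r) / (1 - r)) - B * r) * (r - s) := by
  have tangent := convexOn_mixingEntropy_sub_sq.add_mul_sub_le_of_hasDerivAt hr hs
    (hasDerivAt_mixingEntropy_sub_sq hr)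
  rw [log_div (by linarith [hr.1]) (by linarith [hr.2])]
  linear_combination (A / 2) * tangent

theorem floryHuggins_integrated_taylor_general (A B : ℝ) (hA : 0 < A)
    (W W' : ℝ → ℝ)
    (hW : ∀ r, W r = A / 2 * ((1 + r) * Real.log (1 + r) + (1 - r) * Real.log (1 - r))
        - B / 2 * r ^ 2)
    (hW' : ∀ r, W' r = A / 2 * Real.log ((1 + r) / (1 - r)) - B * r)
    (n : ℕ)
    (Ω : Set (EuclideanSpace ℝ (Fin n)))
    (hΩbdd : Bornology.IsBounded Ω)
    (φ : EuclideanSpace ℝ (Fin n) → ℝ) (hφmeas : Measurable φ)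
    (hφrange : ∀ᵐ x ∂(volume.restrict Ω), φ x ∈ Set.Ioo (-1 : ℝ) 1)
    (hWint : IntegrableOn (fun x => W' (φ x)) Ω)
    (φbar : ℝ)
    (hφbarIoo : φbar ∈ Set.Ioo (-1 : ℝ) 1) :
    ∫ x in Ω, W' (φ x) * (φ x - φbar) ≥
      (∫ x in Ω, W (φ x)) - (volume Ω).toReal * W φbar
        - (B - A) / 2 * ∫ x in Ω, (φ x - φbar) ^ 2 := by
  have hΩ : volume Ω < ⊤ := hΩbdd.measure_lt_top
  have hφ : AEStronglyMeasurable φ (volume.restrict Ω) := hφmeas.aestronglyMeasurable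
  have hφIcc : ∀ᵐ x ∂volume.restrict Ω, φ x ∈ Icc (-1 : ℝ) 1 :=
    hφrange.mono fun _ hx => Ioo_subset_Icc_self hx
  have hWcont : Continuous W := by
    rw [show W = fun r => A / 2 * mixingEntropy r - B / 2 * r ^ 2 from funext hW]
    fun_prop
  have hWφ : IntegrableOn (fun x => W (φ x)) Ω :=
    hWcont.integrableOn_comp_of_ae_mem isCompact_Icc hΩ hφ hφIcc
  have hsq : IntegrableOn (fun x => (φ x - φbar) ^ 2) Ω :=
    (by fun_prop : Continuous fun r => (r - φbar) ^ 2).integrableOn_comp_of_ae_mem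
      isCompact_Icc hΩ hφ hφIcc
  have hW'φ : IntegrableOn (fun x => W' (φ x) * (φ x - φbar)) Ω := by
    refine hWint.mul_bdd (c := 2) (hφ.sub aestronglyMeasurable_const) ?_
    filter_upwards [hφrange] with x hx
    rw [Real.norm_eq_abs, abs_le]
    constructor <;> linarith [hx.1, hx.2, hφbarIoo.1, hφbarIoo.2]
  have hc : IntegrableOn (fun _ => W φbar) Ω := integrableOn_const hΩ.ne
  calc (∫ x in Ω, W (φ x)) - (volume Ω).toReal * W φbar
        - (B - A) / 2 * ∫ x in Ω, (φ x - φbar) ^ 2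
      = ∫ x in Ω, (W (φ x) - W φbar - (B - A) / 2 * (φ x - φbar) ^ 2) := by
        rw [integral_sub (hWφ.fun_sub hc) (hsq.const_mul _), integral_sub hWφ hc,
          setIntegral_const, integral_const_mul, smul_eq_mul, measureReal_def]
    _ ≤ ∫ x in Ω, W' (φ x) * (φ x - φbar) := by
        refine integral_mono_ae ((hWφ.fun_sub hc).fun_sub (hsq.const_mul _)) hW'φ ?_
        filter_upwards [hφrange] with x hx
        rw [hW, hW, hW']
        exact floryHuggins_sub_le_deriv_mul_sub hA.le hx hφbarIoo

/-- Integrated Taylor-type inequality for the Flory–Huggins potential: for a measurable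
`φ` with values a.e. in `(-1,1)` on a bounded measurable set `Ω ⊂ ℝⁿ` of positive
measure, with `W'(φ)` integrable and mean value `φ̄ ∈ (-1,1)`, one has
`∫ W'(φ)(φ - φ̄) ≥ ∫ W(φ) - |Ω|·W(φ̄) - ((B-A)/2)·∫ (φ - φ̄)²`. -/
theorem floryHuggins_integrated_taylor (A B : ℝ) (hA : 0 < A) (hAB : A < B)
    (W W' : ℝ → ℝ)
    (hW : ∀ r, W r = A / 2 * ((1 + r) * Real.log (1 + r) + (1 - r) * Real.log (1 - r))
        - B / 2 * r ^ 2)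
    (hW' : ∀ r, W' r = A / 2 * Real.log ((1 + r) / (1 - r)) - B * r)
    (n : ℕ) (hn : 1 ≤ n)
    (Ω : Set (EuclideanSpace ℝ (Fin n)))
    (hΩmeas : MeasurableSet Ω) (hΩbdd : Bornology.IsBounded Ω)
    (hΩpos : 0 < volume Ω)
    (φ : EuclideanSpace ℝ (Fin n) → ℝ) (hφmeas : Measurable φ)
    (hφrange : ∀ᵐ x ∂(volume.restrict Ω), φ x ∈ Set.Ioo (-1 : ℝ) 1)
    (hWint : IntegrableOn (fun x => W' (φ x)) Ω)
    (φbar : ℝ) (hφbar : φbar = (∫ x in Ω, φ x) / (volume Ω).toReal)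
    (hφbarIoo : φbar ∈ Set.Ioo (-1 : ℝ) 1) :
    ∫ x in Ω, W' (φ x) * (φ x - φbar) ≥
      (∫ x in Ω, W (φ x)) - (volume Ω).toReal * W φbar
        - (B - A) / 2 * ∫ x in Ω, (φ x - φbar) ^ 2 :=
  floryHuggins_integrated_taylor_general A B hA W W' hW hW' n Ω hΩbdd φ hφmeas hφrange hWint φbar
    hφbarIoo
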